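/- arXiv:math/0401418 — 4 statements merged into one kernel-verified Lean document; each statement's English description precedes it below -/
import Mathlib

section
/- Let V be a finite set of points in ℝ^d, W positive on V, and let {ℙ_k} be blocks of orthonormal polynomials on V satisfying the three-term relation x_i ℙ_k = A_{k,i} ℙ_{k+1} + B_{k,i} ℙ_k + A_{k-1,i}^T ℙ_{k-1} mod I(V). Then the Jacobi block matrices J_i built from the B_{k,i} on the diagonal and A_{k,i}, A_{k,i}^T on the off-diagonals commute pairwise: J_i J_j = J_j J_i for 1 ≤ i, j ≤ d. -/
open MvPolynomial

/-- Let `V ⊆ ℝ^d` be finite with positive weight `W`, and let the entries of the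
blocks `ℙ_k` be a graded family of polynomials `P : ι → ℝ[x]` (`deg p` giving
the block of `P p`) which is orthonormal with respect to
`⟨f,g⟩ = Σ_{x∈V} f(x)g(x)W(x)` and whose restrictions to `V` span all functions
on `V`, and which satisfies the three-term (block tridiagonal) relation, i.e.
`⟨x_i P_p, P_q⟩ = 0` whenever the degrees of the blocks differ by at least two.
Then the Jacobi matrices `J_i = (⟨x_i P_p, P_q⟩)_{p,q}` — built from the blocks
`B_{k,i}` on the diagonal and `A_{k,i}`, `A_{k,i}ᵀ` on the off-diagonals —
commute pairwise: `J_i J_j = J_j J_i`. -/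
theorem stmt15 (d : ℕ) (V : Finset (Fin d → ℝ)) (W : (Fin d → ℝ) → ℝ)
    (hW : ∀ x ∈ V, 0 < W x)
    (ι : Type*) [Fintype ι] [DecidableEq ι] (deg : ι → ℕ)
    (P : ι → MvPolynomial (Fin d) ℝ)
    (hdeg : ∀ p, (P p).totalDegree ≤ deg p)
    (horth : ∀ p q, ∑ x ∈ V, eval x (P p) * eval x (P q) * W x =
      if p = q then 1 else 0)
    (hspan : ∀ f : (Fin d → ℝ) → ℝ, ∃ c : ι → ℝ,
      ∀ x ∈ V, f x = ∑ p, c p * eval x (P p))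
    (htri : ∀ i : Fin d, ∀ p q, deg p + 2 ≤ deg q ∨ deg q + 2 ≤ deg p →
      ∑ x ∈ V, eval x (X i * P p) * eval x (P q) * W x = 0)
    (J : Fin d → Matrix ι ι ℝ)
    (hJ : ∀ i p q, J i p q = ∑ x ∈ V, eval x (X i * P p) * eval x (P q) * W x) :
    ∀ i j : Fin d, J i * J j = J j * J i := by
  suffices h : ∀ i j : Fin d, ∀ p r, (J i * J j) p r =
      ∑ x ∈ V, eval x (X i) * eval x (X j) * eval x (P p) * eval x (P r) * W x by
    intro i j
    ext p r
    rw [h i j p r, h j i p r]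
    exact Finset.sum_congr rfl fun x _ => by ring
  intro i j p r
  obtain ⟨c, hc⟩ := hspan (fun x => eval x (X i * P p))
  have hcoef : ∀ q, J i p q = c q := by
    intro q
    rw [hJ]
    calc ∑ x ∈ V, eval x (X i * P p) * eval x (P q) * W x
        = ∑ x ∈ V, ∑ s, c s * (eval x (P s) * eval x (P q) * W x) := by
          refine Finset.sum_congr rfl fun x hx => ?_
          rw [show eval x (X i * P p) = ∑ s, c s * eval x (P s) from hc x hx,
            Finset.sum_mul, Finset.sum_mul]
          exact Finset.sum_congr rfl fun s _ => by ring
      _ = ∑ s, c s * ∑ x ∈ V, eval x (P s) * eval x (P q) * W x := by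
          rw [Finset.sum_comm]
          exact Finset.sum_congr rfl fun s _ => by rw [Finset.mul_sum]
      _ = c q := by
          simp only [horth, mul_ite, mul_one, mul_zero, Finset.sum_ite_eq', Finset.mem_univ,
            if_true]
  calc (J i * J j) p r = ∑ q, c q * ∑ x ∈ V, eval x (X j * P q) * eval x (P r) * W x := by
        simp only [Matrix.mul_apply, hcoef, hJ]
    _ = ∑ x ∈ V, (∑ q, c q * eval x (P q)) * (eval x (X j) * eval x (P r) * W x) := by
        simp only [Finset.mul_sum]
        rw [Finset.sum_comm]
        refine Finset.sum_congr rfl fun x _ => ?_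
        rw [Finset.sum_mul]
        refine Finset.sum_congr rfl fun q _ => ?_
        simp only [eval_mul]
        ring
    _ = ∑ x ∈ V, eval x (X i) * eval x (X j) * eval x (P p) * eval x (P r) * W x := by
        refine Finset.sum_congr rfl fun x hx => ?_
        rw [← hc x hx]
        simp only [eval_mul]
        ring
end

section
/- Let p_0,...,p_N be polynomials of one variable with deg p_n = n, p_0 = 1, satisfying a three-term relation x p_n = a_n p_{n+1} + b_n p_n + c_n p_{n-1} for 0 ≤ n ≤ N-1 with a_n c_{n+1} > 0 for all n (p_{-1}=0). Then there exist N+1 distinct real points x_0,...,x_N and positive weights λ_0,...,λ_N such that Σ_j λ_j p_n(x_j) p_m(x_j) = 0 for all n ≠ m with n, m ≤ N. -/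
open Polynomial Matrix

namespace Favard17

variable (N : ℕ) (a b c : ℕ → ℝ)

/-- scaling factors to symmetrize the recurrence -/
noncomputable def rr : ℕ → ℝ
  | 0 => 1
  | n+1 => rr n * (if n + 2 ≤ N then Real.sqrt (a n / c (n+1)) else 1)

/-- off-diagonal entries of the Jacobi matrix -/
noncomputable def s (n : ℕ) : ℝ := a n * rr N a c n / rr N a c (n+1)

/-- Jacobi matrix -/
noncomputable def J : Matrix (Fin (N+1)) (Fin (N+1)) ℝ :=
  Matrix.of fun i j =>
    if (i : ℕ) = (j : ℕ) then b i
    else if (i : ℕ) + 1 = (j : ℕ) then s N a c i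
    else if (j : ℕ) + 1 = (i : ℕ) then s N a c j
    else 0

variable {N a b c}

lemma div_pos_of_mul_pos {x y : ℝ} (h : 0 < x * y) : 0 < x / y := by
  rcases mul_pos_iff.mp h with ⟨hx, hy⟩ | ⟨hx, hy⟩
  · exact div_pos hx hy
  · exact div_pos_of_neg_of_neg hx hy

lemma rr_pos (hac : ∀ n, n + 2 ≤ N → 0 < a n * c (n + 1)) : ∀ n, 0 < rr N a c n := by
  intro n
  induction n with
  | zero => simp [rr]
  | succ k ih =>
    rw [rr]
    split_ifs with h
    · exact mul_pos ih (Real.sqrt_pos.mpr (div_pos_of_mul_pos (hac k h)))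
    · simpa using ih

lemma s_ne_zero (hac : ∀ n, n + 2 ≤ N → 0 < a n * c (n + 1))
    {n : ℕ} (han : a n ≠ 0) : s N a c n ≠ 0 := by
  have h1 := (rr_pos hac n).ne'
  have h2 := (rr_pos hac (n+1)).ne'
  exact div_ne_zero (mul_ne_zero han h1) h2

lemma a_mul_rr (hac : ∀ n, n + 2 ≤ N → 0 < a n * c (n + 1)) (n : ℕ) :
    a n * rr N a c n = s N a c n * rr N a c (n+1) := by
  rw [s, div_mul_cancel₀]
  exact (rr_pos hac (n+1)).ne'

lemma c_mul_rr (hac : ∀ n, n + 2 ≤ N → 0 < a n * c (n + 1))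
    {n : ℕ} (hn : 1 ≤ n) (hn' : n + 1 ≤ N) :
    c n * rr N a c n = s N a c (n-1) * rr N a c (n-1) := by
  obtain ⟨m, rfl⟩ : ∃ m, n = m + 1 := ⟨n - 1, by omega⟩
  have hmc : 0 < a m * c (m + 1) := hac m (by omega)
  have hcm : c (m+1) ≠ 0 := by
    intro h; rw [h, mul_zero] at hmc; exact lt_irrefl 0 hmc
  have hrm := (rr_pos hac m).ne'
  have hdiv : 0 < a m / c (m+1) := div_pos_of_mul_pos hmc
  have hrr : rr N a c (m+1) = rr N a c m * Real.sqrt (a m / c (m+1)) := by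
    rw [rr, if_pos (by omega)]
  have hsq : Real.sqrt (a m / c (m+1)) * Real.sqrt (a m / c (m+1)) = a m / c (m+1) :=
    Real.mul_self_sqrt hdiv.le
  have hs : Real.sqrt (a m / c (m+1)) ≠ 0 := (Real.sqrt_pos.mpr hdiv).ne'
  simp only [Nat.add_sub_cancel, s, hrr]
  rw [div_mul_eq_mul_div, eq_div_iff (mul_ne_zero hrm hs)]
  have key : (rr N a c m * Real.sqrt (a m / c (m+1))) *
      (rr N a c m * Real.sqrt (a m / c (m+1))) =
      rr N a c m * rr N a c m * (a m / c (m+1)) := by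
    rw [mul_mul_mul_comm, hsq]
  calc c (m+1) * (rr N a c m * Real.sqrt (a m / c (m+1))) *
        (rr N a c m * Real.sqrt (a m / c (m+1)))
      = c (m+1) * ((rr N a c m * Real.sqrt (a m / c (m+1))) *
        (rr N a c m * Real.sqrt (a m / c (m+1)))) := by ring
    _ = c (m+1) * (rr N a c m * rr N a c m * (a m / c (m+1))) := by rw [key]
    _ = a m * rr N a c m * rr N a c m := by field_simp

lemma J_symm : (J N a b c).IsHermitian := by
  ext i j
  simp only [Matrix.conjTranspose_apply, star_trivial, J, Matrix.of_apply]
  split_ifs with h1 h2 h3 h4 h5 h6 h7 h8 h9 <;>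
    first
      | rfl
      | omega
      | (obtain rfl : i = j := Fin.ext (by omega); rfl)

lemma rowsum (v : Fin (N+1) → ℝ) (i : Fin (N+1)) :
    (J N a b c *ᵥ v) i =
      (if h : (i : ℕ) + 1 ≤ N then s N a c i * v ⟨(i : ℕ) + 1, by omega⟩ else 0)
      + b i * v i
      + (if h : 0 < (i : ℕ) then s N a c ((i : ℕ) - 1) * v ⟨(i : ℕ) - 1, by omega⟩ else 0) := by
  rw [Matrix.mulVec, dotProduct]
  have hsplit : ∀ j : Fin (N+1), J N a b c i j * v j =
      (if ((i : ℕ) + 1 = (j : ℕ)) then s N a c i * v j else 0)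
      + (if ((i : ℕ) = (j : ℕ)) then b i * v j else 0)
      + (if ((j : ℕ) + 1 = (i : ℕ)) then s N a c j * v j else 0) := by
    intro j
    simp only [J, Matrix.of_apply]
    split_ifs with h1 h2 h3 h4 h5 h6 <;> first | ring1 | (exfalso; omega)
  rw [Finset.sum_congr rfl fun j _ => hsplit j]
  rw [Finset.sum_add_distrib, Finset.sum_add_distrib]
  congr 1
  · congr 1
    · by_cases h : (i : ℕ) + 1 ≤ N
      · rw [dif_pos h]
        have heq : ∀ j : Fin (N+1), ((i : ℕ) + 1 = (j : ℕ)) ↔ j = ⟨(i : ℕ) + 1, by omega⟩ := by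
          intro j; rw [Fin.ext_iff]; simp only [Fin.val_mk]; omega
        simp_rw [heq]
        rw [Finset.sum_ite_eq' Finset.univ (⟨(i : ℕ) + 1, by omega⟩ : Fin (N+1))
          (fun j => s N a c i * v j), if_pos (Finset.mem_univ _)]
      · rw [dif_neg h]
        apply Finset.sum_eq_zero
        intro j _
        rw [if_neg]
        omega
    · have heq : ∀ j : Fin (N+1), ((i : ℕ) = (j : ℕ)) ↔ j = i := by
        intro j; rw [Fin.ext_iff]; omega
      simp_rw [heq]
      rw [Finset.sum_ite_eq' Finset.univ i (fun j => b i * v j), if_pos (Finset.mem_univ _)]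
  · by_cases h : 0 < (i : ℕ)
    · rw [dif_pos h]
      have heq : ∀ j : Fin (N+1), ((j : ℕ) + 1 = (i : ℕ)) ↔ j = ⟨(i : ℕ) - 1, by omega⟩ := by
        intro j; rw [Fin.ext_iff]; simp only [Fin.val_mk]; omega
      simp_rw [heq]
      rw [Finset.sum_ite_eq' Finset.univ (⟨(i : ℕ) - 1, by omega⟩ : Fin (N+1))
        (fun j => s N a c (j : ℕ) * v j), if_pos (Finset.mem_univ _)]
    · rw [dif_neg h]
      apply Finset.sum_eq_zero
      intro j _
      rw [if_neg]
      omega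

lemma rowsum_nat (v : Fin (N+1) → ℝ) (m : ℕ) (hm : m < N + 1) :
    (J N a b c *ᵥ v) ⟨m, hm⟩ =
      (if h : m + 1 ≤ N then s N a c m * v ⟨m + 1, by omega⟩ else 0)
      + b m * v ⟨m, hm⟩
      + (if h : 0 < m then s N a c (m - 1) * v ⟨m - 1, by omega⟩ else 0) :=
  rowsum v ⟨m, hm⟩

section WithPoly

variable (p : ℕ → Polynomial ℝ)

/-- the renormalized polynomials evaluated -/
noncomputable def Q (x : ℝ) (n : ℕ) : ℝ := rr N a c n * eval x (p n)

variable {p}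

lemma Q_zero (h0 : p 0 = 1) (x : ℝ) : Q (N := N) (a := a) (c := c) p x 0 = 1 := by
  simp [Q, rr, h0]

lemma Q_rec0 (hrec0 : N ≥ 1 → X * p 0 = C (a 0) * p 1 + C (b 0) * p 0)
    (hac : ∀ n, n + 2 ≤ N → 0 < a n * c (n + 1))
    (hN : 1 ≤ N) (x : ℝ) :
    x * Q (N := N) (a := a) (c := c) p x 0 =
      b 0 * Q (N := N) (a := a) (c := c) p x 0 +
      s N a c 0 * Q (N := N) (a := a) (c := c) p x 1 := by
  have h := congrArg (eval x) (hrec0 hN)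
  simp only [eval_mul, eval_add, eval_X, eval_C] at h
  have ha0 : a 0 * rr N a c 0 = s N a c 0 * rr N a c 1 := a_mul_rr hac 0
  simp only [Q]
  have hr0 : rr N a c 0 = 1 := rfl
  rw [hr0] at ha0 ⊢
  calc x * (1 * eval x (p 0)) = a 0 * eval x (p 1) + b 0 * eval x (p 0) := by
        rw [← h]; ring
    _ = (a 0 * 1) * eval x (p 1) + b 0 * (1 * eval x (p 0)) := by ring
    _ = b 0 * (1 * eval x (p 0)) + s N a c 0 * (rr N a c 1 * eval x (p 1)) := by
        rw [ha0]; ring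

lemma Q_rec (hrec : ∀ n, 1 ≤ n → n + 1 ≤ N →
      X * p n = C (a n) * p (n + 1) + C (b n) * p n + C (c n) * p (n - 1))
    (hac : ∀ n, n + 2 ≤ N → 0 < a n * c (n + 1))
    {n : ℕ} (h1 : 1 ≤ n) (h2 : n + 1 ≤ N) (x : ℝ) :
    x * Q (N := N) (a := a) (c := c) p x n =
      s N a c (n-1) * Q (N := N) (a := a) (c := c) p x (n-1) +
      b n * Q (N := N) (a := a) (c := c) p x n +
      s N a c n * Q (N := N) (a := a) (c := c) p x (n+1) := by
  have h := congrArg (eval x) (hrec n h1 h2)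
  simp only [eval_mul, eval_add, eval_X, eval_C] at h
  have han : a n * rr N a c n = s N a c n * rr N a c (n+1) := a_mul_rr hac n
  have hcn : c n * rr N a c n = s N a c (n-1) * rr N a c (n-1) := c_mul_rr hac h1 h2
  simp only [Q]
  calc x * (rr N a c n * eval x (p n))
      = (a n * eval x (p (n+1)) + b n * eval x (p n) + c n * eval x (p (n-1))) *
        rr N a c n := by rw [← h]; ring
    _ = (a n * rr N a c n) * eval x (p (n+1)) + b n * (rr N a c n * eval x (p n)) +
        (c n * rr N a c n) * eval x (p (n-1)) := by ring
    _ = _ := by rw [han, hcn]; ring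

lemma eigvec_structure
    (h0 : p 0 = 1)
    (hrec0 : N ≥ 1 → X * p 0 = C (a 0) * p 1 + C (b 0) * p 0)
    (hrec : ∀ n, 1 ≤ n → n + 1 ≤ N →
      X * p n = C (a n) * p (n + 1) + C (b n) * p n + C (c n) * p (n - 1))
    (ha : ∀ n, n + 1 ≤ N → a n ≠ 0)
    (hac : ∀ n, n + 2 ≤ N → 0 < a n * c (n + 1))
    (x : ℝ) (v : Fin (N+1) → ℝ) (hv : J N a b c *ᵥ v = x • v) :
    ∀ n, ∀ hn : n ≤ N, v ⟨n, by omega⟩ =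
      v ⟨0, by omega⟩ * Q (N := N) (a := a) (c := c) p x n := by
  intro n
  induction n using Nat.strong_induction_on with
  | _ n IH =>
    intro hn
    match n, hn with
    | 0, hn => simp [Q_zero h0]
    | (m+1), hn =>
      have hmN : m < N + 1 := by omega
      have hrow := congrFun hv ⟨m, hmN⟩
      rw [rowsum_nat] at hrow
      simp only [Pi.smul_apply, smul_eq_mul] at hrow
      rw [dif_pos (show m + 1 ≤ N by omega)] at hrow
      have hsm : s N a c m ≠ 0 := s_ne_zero hac (ha m (by omega))
      match m with
      | 0 =>
        rw [dif_neg (by omega)] at hrow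
        have hQ := Q_rec0 (a := a) (b := b) (c := c) hrec0 hac (by omega) x
        rw [Q_zero h0] at hQ
        apply mul_left_cancel₀ hsm
        simp only [Nat.zero_add] at hrow ⊢
        linear_combination hrow + v ⟨0, hmN⟩ * hQ
      | (k+1) =>
        rw [dif_pos (by omega)] at hrow
        have IH1 := IH (k+1) (by omega) (by omega)
        have IH0 := IH k (by omega) (by omega)
        have hQ := Q_rec (a := a) (b := b) (c := c) hrec hac
          (show 1 ≤ k+1 by omega) (show (k+1)+1 ≤ N by omega) x
        simp only [Nat.add_sub_cancel] at hQ hrow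
        apply mul_left_cancel₀ hsm
        have e1 : v ⟨k+1, hmN⟩ = v ⟨0, by omega⟩ * Q (N := N) (a := a) (c := c) p x (k+1) := IH1
        have e0 : v ⟨k, by omega⟩ = v ⟨0, by omega⟩ * Q (N := N) (a := a) (c := c) p x k := IH0
        rw [e1, e0] at hrow
        linear_combination hrow + v ⟨0, by omega⟩ * hQ

end WithPoly

end Favard17

open Favard17 in
/-- Discrete Favard theorem in one variable: if `p_0,…,p_N` with `deg p_n = n`,
`p_0 = 1`, satisfy the three-term relation
`x p_n = a_n p_{n+1} + b_n p_n + c_n p_{n-1}` (`p_{-1} = 0`) with `a_n ≠ 0` and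
`a_n c_{n+1} > 0`, then they are orthogonal with respect to positive weights
`λ_j` at `N+1` distinct points `x_j`. -/
theorem stmt17 (N : ℕ) (p : ℕ → Polynomial ℝ) (a b c : ℕ → ℝ)
    (hdeg : ∀ n, n ≤ N → (p n).natDegree = n) (h0 : p 0 = 1)
    (hrec0 : N ≥ 1 → X * p 0 = C (a 0) * p 1 + C (b 0) * p 0)
    (hrec : ∀ n, 1 ≤ n → n + 1 ≤ N →
      X * p n = C (a n) * p (n + 1) + C (b n) * p n + C (c n) * p (n - 1))
    (ha : ∀ n, n + 1 ≤ N → a n ≠ 0)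
    (hac : ∀ n, n + 2 ≤ N → 0 < a n * c (n + 1)) :
    ∃ x : Fin (N + 1) → ℝ, Function.Injective x ∧
      ∃ lam : Fin (N + 1) → ℝ, (∀ j, 0 < lam j) ∧
        ∀ n m, n ≤ N → m ≤ N → n ≠ m →
          ∑ j, lam j * eval (x j) (p n) * eval (x j) (p m) = 0 := by
  classical
  have hJ : (J N a b c).IsHermitian := J_symm
  set x : Fin (N+1) → ℝ := hJ.eigenvalues with hx
  set v : Fin (N+1) → Fin (N+1) → ℝ := fun j => ⇑(hJ.eigenvectorBasis j) with hvdef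
  have hv : ∀ j, J N a b c *ᵥ v j = x j • v j := fun j => hJ.mulVec_eigenvectorBasis j
  -- structure of eigenvectors
  have hstruct : ∀ j, ∀ n, ∀ hn : n ≤ N, v j ⟨n, by omega⟩ =
      v j ⟨0, by omega⟩ * Q (N := N) (a := a) (c := c) p (x j) n :=
    fun j => eigvec_structure h0 hrec0 hrec ha hac (x j) (v j) (hv j)
  have hzero : (⟨0, by omega⟩ : Fin (N+1)) = 0 := rfl
  -- column orthonormality
  have hcol : ∀ i j, ∑ n, v i n * v j n = if i = j then (1:ℝ) else 0 := by
    intro i j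
    have horth := hJ.eigenvectorBasis.orthonormal
    rw [orthonormal_iff_ite] at horth
    have h2 := horth i j
    simpa [PiLp.inner_apply, RCLike.inner_apply, mul_comm] using h2
  -- row orthonormality
  have hrowo : ∀ n m : Fin (N+1), ∑ j, v j n * v j m = if n = m then (1:ℝ) else 0 := by
    intro n m
    set U : Matrix (Fin (N+1)) (Fin (N+1)) ℝ := Matrix.of fun n j => v j n with hU
    have hUtU : Uᵀ * U = 1 := by
      ext i j
      rw [Matrix.mul_apply, Matrix.one_apply]
      simpa [U, Matrix.transpose_apply] using hcol i j
    have hUUt : U * Uᵀ = 1 := mul_eq_one_comm.mp hUtU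
    have := congrFun (congrFun hUUt n) m
    rw [Matrix.mul_apply, Matrix.one_apply] at this
    simpa [U, Matrix.transpose_apply] using this
  -- first components are nonzero
  have hv0 : ∀ j, v j 0 ≠ 0 := by
    intro j hj
    have hall : ∀ i : Fin (N+1), v j i = 0 := by
      intro i
      have hi : (i : ℕ) ≤ N := by omega
      have := hstruct j (i : ℕ) hi
      rw [hzero, hj] at this
      simpa using this
    have hne := hJ.eigenvectorBasis.orthonormal.ne_zero j
    apply hne
    apply PiLp.ext
    intro i
    exact hall i
  -- the Q-vector has positive norm
  have hQsum : ∀ y : ℝ, (0:ℝ) < ∑ n : Fin (N+1), (Q (N := N) (a := a) (c := c) p y (n : ℕ))^2 := by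
    intro y
    have h1 : ((1:ℝ)) ≤ ∑ n : Fin (N+1), (Q (N := N) (a := a) (c := c) p y (n : ℕ))^2 := by
      have := Finset.single_le_sum (f := fun n : Fin (N+1) =>
        (Q (N := N) (a := a) (c := c) p y (n : ℕ))^2)
        (fun i _ => sq_nonneg _) (Finset.mem_univ (0 : Fin (N+1)))
      simpa [Q_zero h0] using this
    linarith
  -- injectivity
  have hinj : Function.Injective x := by
    intro i j hij
    by_contra hne
    have h2 := hcol i j
    rw [if_neg hne] at h2
    have h3 : ∀ n : Fin (N+1), v i n * v j n =
        (v i 0 * v j 0) * (Q (N := N) (a := a) (c := c) p (x i) (n : ℕ))^2 := by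
      intro n
      have hi := hstruct i (n : ℕ) (by omega)
      have hjn := hstruct j (n : ℕ) (by omega)
      rw [hzero] at hi hjn
      rw [← hij] at hjn
      have hn : (⟨(n : ℕ), by omega⟩ : Fin (N+1)) = n := rfl
      rw [hn] at hi hjn
      rw [hi, hjn]; ring
    rw [Finset.sum_congr rfl fun n _ => h3 n, ← Finset.mul_sum] at h2
    have := mul_ne_zero (mul_ne_zero (hv0 i) (hv0 j)) (hQsum (x i)).ne'
    exact this h2
  refine ⟨x, hinj, fun j => (v j 0)^2, ?_, ?_⟩
  · intro j
    exact lt_of_le_of_ne (sq_nonneg _) (Ne.symm (pow_ne_zero 2 (hv0 j)))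
  · intro n m hn hm hnm
    have hfin : (⟨n, by omega⟩ : Fin (N+1)) ≠ ⟨m, by omega⟩ := by
      intro h; exact hnm (by simpa [Fin.ext_iff] using h)
    have h2 := hrowo ⟨n, by omega⟩ ⟨m, by omega⟩
    rw [if_neg hfin] at h2
    have h3 : ∀ j : Fin (N+1), v j ⟨n, by omega⟩ * v j ⟨m, by omega⟩ =
        (rr N a c n * rr N a c m) *
          ((v j 0)^2 * eval (x j) (p n) * eval (x j) (p m)) := by
      intro j
      have h4 := hstruct j n hn
      have h5 := hstruct j m hm
      rw [hzero] at h4 h5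
      rw [h4, h5]
      simp only [Q]
      ring
    rw [Finset.sum_congr rfl fun j _ => h3 j, ← Finset.mul_sum] at h2
    have hrrn := (rr_pos (a := a) (c := c) hac n).ne'
    have hrrm := (rr_pos (a := a) (c := c) hac m).ne'
    rcases mul_eq_zero.mp h2 with h | h
    · exact absurd h (mul_ne_zero hrrn hrrm)
    · exact h
end

section
/- Let x_0 < x_1 < ... < x_n and y_0 < y_1 < ... < y_m be real numbers, and let n_0 ≥ n_1 ≥ ... ≥ n_m ≥ 0 be integers with n_0 ≤ n. Define V = {(x_i, y_j) : 0 ≤ j ≤ m, 0 ≤ i ≤ n_j}. Then |V| = Σ_{j=0}^m (n_j + 1), and every function from V to ℝ is the restriction to V of a polynomial of the form Σ_{(k,l)∈Λ} c_{k,l} x^k y^l, where Λ = {(k,l) : 0 ≤ l ≤ m, 0 ≤ k ≤ n_l}; moreover this representation is unique. -/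
set_option maxHeartbeats 1000000

open Finset

/-- Univariate: strictly increasing nodes kill coefficients. -/
lemma uni_aux (d : ℕ) (t : ℕ → ℝ) (ht : ∀ i i', i < i' → i' ≤ d → t i < t i') (a : ℕ → ℝ)
    (h : ∀ i ≤ d, ∑ k ∈ Finset.range (d + 1), a k * t i ^ k = 0) :
    ∀ k ≤ d, a k = 0 := by
  have hinj : Function.Injective (fun i : Fin (d + 1) => t i) := by
    intro i j hij
    by_contra hne
    rcases lt_or_gt_of_ne (fun h' : (i : ℕ) = (j : ℕ) => hne (Fin.ext h')) with h' | h'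
    · exact absurd hij (ne_of_lt (ht i j h' (Nat.lt_succ_iff.mp j.isLt)))
    · exact absurd hij.symm (ne_of_lt (ht j i h' (Nat.lt_succ_iff.mp i.isLt)))
  have := Matrix.eq_zero_of_forall_index_sum_mul_pow_eq_zero (n := d + 1)
    (f := fun i : Fin (d+1) => t i) (v := fun k : Fin (d+1) => a k) hinj
    (fun j => by
      have := h j (Nat.lt_succ_iff.mp j.isLt)
      calc ∑ i : Fin (d+1), a i * t j ^ (i : ℕ)
          = ∑ k ∈ Finset.range (d + 1), a k * t j ^ k :=
            Fin.sum_univ_eq_sum_range (fun k => a k * t j ^ k) (d+1)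
        _ = 0 := this)
  intro k hk
  exact congrFun this ⟨k, Nat.lt_succ_of_le hk⟩

lemma anti_aux (m : ℕ) (nseq : ℕ → ℕ) (hmono : ∀ j, j + 1 ≤ m → nseq (j + 1) ≤ nseq j) :
    ∀ j' ≤ m, ∀ j ≤ j', nseq j' ≤ nseq j := by
  intro j' hj'
  induction j' with
  | zero => intro j hj; interval_cases j; exact le_rfl
  | succ a ih =>
    intro j hj
    rcases Nat.lt_succ_iff_lt_or_eq.mp (Nat.lt_succ_of_le hj) with h | h
    · exact le_trans (hmono a hj') (ih (by omega) j (by omega))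
    · rw [h]

/-- Key injectivity lemma for the staircase. -/
lemma key_aux (x y : ℕ → ℝ) : ∀ (m : ℕ) (nseq : ℕ → ℕ),
    (∀ i i', i < i' → i' ≤ nseq 0 → x i < x i') →
    (∀ j j', j < j' → j' ≤ m → y j < y j') →
    (∀ j, j + 1 ≤ m → nseq (j + 1) ≤ nseq j) →
    ∀ c : ℕ × ℕ → ℝ,
    (∀ j ≤ m, ∀ i ≤ nseq j, ∑ l ∈ Finset.range (m + 1), ∑ k ∈ Finset.range (nseq l + 1),
        c (k, l) * x i ^ k * y j ^ l = 0) →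
    ∀ l ≤ m, ∀ k ≤ nseq l, c (k, l) = 0 := by
  intro m
  induction m with
  | zero =>
    intro nseq hx hy hmono c hz l hl k hk
    interval_cases l
    have h0 : ∀ i ≤ nseq 0, ∑ k ∈ Finset.range (nseq 0 + 1), (fun k => c (k, 0)) k * x i ^ k = 0 := by
      intro i hi
      have := hz 0 le_rfl i hi
      simpa using this
    exact uni_aux (nseq 0) x hx _ h0 k hk
  | succ m ih =>
    intro nseq hx hy hmono c hz
    have hanti := anti_aux (m + 1) nseq hmono
    -- Step A : top row coefficients vanish
    have stepA : ∀ k ≤ nseq (m + 1), c (k, m + 1) = 0 := by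
      have hA : ∀ i ≤ nseq (m + 1),
          ∑ k ∈ Finset.range (nseq (m + 1) + 1), c (k, m + 1) * x i ^ k = 0 := by
        intro i hi
        have hal : ∀ l ≤ m + 1,
            (fun l => ∑ k ∈ Finset.range (nseq l + 1), c (k, l) * x i ^ k) l = 0 := by
          apply uni_aux (m + 1) y hy
          intro j hj
          have := hz j hj i (le_trans hi (hanti (m+1) le_rfl j hj))
          calc ∑ l ∈ Finset.range (m + 1 + 1),
                  (∑ k ∈ Finset.range (nseq l + 1), c (k, l) * x i ^ k) * y j ^ l
                = ∑ l ∈ Finset.range (m + 1 + 1), ∑ k ∈ Finset.range (nseq l + 1),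
                  c (k, l) * x i ^ k * y j ^ l := by
                  refine Finset.sum_congr rfl fun l _ => ?_
                  rw [Finset.sum_mul]
              _ = 0 := this
        exact hal (m + 1) le_rfl
      apply uni_aux (nseq (m + 1)) x ?_ _ hA
      intro i i' hii' hi'
      exact hx i i' hii' (le_trans hi' (hanti (m + 1) le_rfl 0 (Nat.zero_le _)))
    refine fun l hl k hk => ?_
    rcases Nat.lt_succ_iff_lt_or_eq.mp (Nat.lt_succ_of_le hl) with h | h
    · -- use induction hypothesis
      have hz' : ∀ j ≤ m, ∀ i ≤ nseq j, ∑ l ∈ Finset.range (m + 1),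
          ∑ k ∈ Finset.range (nseq l + 1), c (k, l) * x i ^ k * y j ^ l = 0 := by
        intro j hj i hi
        have h1 := hz j (by omega) i hi
        rw [Finset.sum_range_succ] at h1
        have h2 : ∑ k ∈ Finset.range (nseq (m + 1) + 1),
            c (k, m + 1) * x i ^ k * y j ^ (m + 1) = 0 := by
          apply Finset.sum_eq_zero
          intro k hk'
          rw [stepA k (Nat.lt_succ_iff.mp (Finset.mem_range.mp hk'))]
          ring
        rw [h2, add_zero] at h1
        exact h1
      exact ih nseq hx (fun j j' hjj' hj' => hy j j' hjj' (by omega))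
        (fun j hj => hmono j (by omega)) c hz' l (by omega) k hk
    · rw [h] at hk ⊢
      exact stepA k hk

/-- The staircase index finset. -/
def Lam (n m : ℕ) (nseq : ℕ → ℕ) : Finset (ℕ × ℕ) :=
  (Finset.range (n + 1) ×ˢ Finset.range (m + 1)).filter (fun q => q.1 ≤ nseq q.2)

lemma mem_Lam {n m : ℕ} {nseq : ℕ → ℕ} (hle : ∀ j ≤ m, nseq j ≤ n) (q : ℕ × ℕ) :
    q ∈ Lam n m nseq ↔ q.2 ≤ m ∧ q.1 ≤ nseq q.2 := by
  simp only [Lam, Finset.mem_filter, Finset.mem_product, Finset.mem_range, Nat.lt_succ_iff]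
  constructor
  · rintro ⟨⟨-, h2⟩, h3⟩; exact ⟨h2, h3⟩
  · rintro ⟨h2, h3⟩; exact ⟨⟨le_trans h3 (hle _ h2), h2⟩, h3⟩

lemma sum_Lam {M : Type*} [AddCommMonoid M] {n m : ℕ} {nseq : ℕ → ℕ}
    (hle : ∀ j ≤ m, nseq j ≤ n) (g : ℕ × ℕ → M) :
    ∑ q ∈ Lam n m nseq, g q
      = ∑ l ∈ Finset.range (m + 1), ∑ k ∈ Finset.range (nseq l + 1), g (k, l) := by
  rw [Lam, Finset.sum_filter, Finset.sum_product_right]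
  refine Finset.sum_congr rfl fun l hl => ?_
  rw [← Finset.sum_filter]
  have hl' : nseq l ≤ n := hle l (Nat.lt_succ_iff.mp (Finset.mem_range.mp hl))
  have : (Finset.range (n + 1)).filter (fun k => k ≤ nseq l) = Finset.range (nseq l + 1) := by
    ext k; simp only [Finset.mem_filter, Finset.mem_range]; omega
  rw [this]

lemma card_Lam {n m : ℕ} {nseq : ℕ → ℕ} (hle : ∀ j ≤ m, nseq j ≤ n) :
    (Lam n m nseq).card = ∑ j ∈ Finset.range (m + 1), (nseq j + 1) := by
  rw [Finset.card_eq_sum_ones, sum_Lam hle]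
  simp

/-- For the staircase point set `V = {(x_i,y_j) : 0 ≤ j ≤ m, 0 ≤ i ≤ n_j}` with
`x_0 < … < x_n`, `y_0 < … < y_m` and `n ≥ n_0 ≥ n_1 ≥ … ≥ n_m ≥ 0`, the set `V`
has `Σ_j (n_j + 1)` points and every real-valued function on `V` is the
restriction of a unique polynomial `Σ_{(k,l)∈Λ} c_{k,l} x^k y^l` supported on
the staircase monomial set `Λ = {(k,l) : 0 ≤ l ≤ m, 0 ≤ k ≤ n_l}`. -/
theorem stmt18 (n m : ℕ) (x y : ℕ → ℝ) (nseq : ℕ → ℕ)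
    (hx : ∀ i i', i < i' → i' ≤ n → x i < x i')
    (hy : ∀ j j', j < j' → j' ≤ m → y j < y j')
    (hmono : ∀ j, j + 1 ≤ m → nseq (j + 1) ≤ nseq j)
    (hn0 : nseq 0 ≤ n)
    (V : Set (ℝ × ℝ)) (hV : V = {p | ∃ j ≤ m, ∃ i ≤ nseq j, p = (x i, y j)}) :
    V.ncard = ∑ j ∈ Finset.range (m + 1), (nseq j + 1) ∧
    ∀ f : ℝ × ℝ → ℝ, ∃! c : ℕ × ℕ → ℝ,
      (∀ q : ℕ × ℕ, ¬(q.2 ≤ m ∧ q.1 ≤ nseq q.2) → c q = 0) ∧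
      ∀ p ∈ V, f p =
        ∑ q ∈ (Finset.range (n + 1) ×ˢ Finset.range (m + 1)).filter
            (fun q => q.1 ≤ nseq q.2),
          c q * p.1 ^ q.1 * p.2 ^ q.2 := by
  classical
  have hle : ∀ j ≤ m, nseq j ≤ n := fun j hj =>
    le_trans (anti_aux m nseq hmono j hj 0 (Nat.zero_le _)) hn0
  have hmemΛ := fun q => mem_Lam (n := n) (m := m) (nseq := nseq) hle q
  have hptΛ : ∀ j ≤ m, ∀ i ≤ nseq j, (i, j) ∈ Lam n m nseq :=
    fun j hj i hi => (hmemΛ _).mpr ⟨hj, hi⟩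
  have hxinj : ∀ i ≤ n, ∀ i' ≤ n, x i = x i' → i = i' := by
    intro i hi i' hi' hxx
    by_contra hne
    rcases Nat.lt_or_ge i i' with h | h
    · exact absurd hxx (ne_of_lt (hx i i' h hi'))
    · exact absurd hxx.symm (ne_of_lt (hx i' i (by omega) hi))
  have hyinj : ∀ j ≤ m, ∀ j' ≤ m, y j = y j' → j = j' := by
    intro j hj j' hj' hyy
    by_contra hne
    rcases Nat.lt_or_ge j j' with h | h
    · exact absurd hyy (ne_of_lt (hy j j' h hj'))
    · exact absurd hyy.symm (ne_of_lt (hy j' j (by omega) hj))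
  constructor
  · -- cardinality
    have hVeq : V = ↑((Lam n m nseq).image (fun q => (x q.1, y q.2))) := by
      rw [hV]; ext p
      simp only [Finset.coe_image, Set.mem_image, Finset.mem_coe, Set.mem_setOf_eq]
      constructor
      · rintro ⟨j, hj, i, hi, rfl⟩; exact ⟨(i, j), hptΛ j hj i hi, rfl⟩
      · rintro ⟨q, hq, rfl⟩
        obtain ⟨h2, h3⟩ := (hmemΛ q).mp hq
        exact ⟨q.2, h2, q.1, h3, rfl⟩
    have hinjOn : Set.InjOn (fun q : ℕ × ℕ => (x q.1, y q.2)) ↑(Lam n m nseq) := by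
      intro q hq q' hq' heq
      obtain ⟨h2, h3⟩ := (hmemΛ q).mp (Finset.mem_coe.mp hq)
      obtain ⟨h2', h3'⟩ := (hmemΛ q').mp (Finset.mem_coe.mp hq')
      have e1 : x q.1 = x q'.1 := congrArg Prod.fst heq
      have e2 : y q.2 = y q'.2 := congrArg Prod.snd heq
      exact Prod.ext
        (hxinj _ (le_trans h3 (hle _ h2)) _ (le_trans h3' (hle _ h2')) e1)
        (hyinj _ h2 _ h2' e2)
    rw [hVeq, Set.ncard_coe_finset, Finset.card_image_of_injOn hinjOn, card_Lam hle]
  · -- interpolation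
    set M : Matrix (↥(Lam n m nseq)) (↥(Lam n m nseq)) ℝ :=
      Matrix.of (fun t t' => x (t.1).1 ^ (t'.1).1 * y (t.1).2 ^ (t'.1).2) with hM
    have hsum_mv : ∀ (v : ↥(Lam n m nseq) → ℝ) (t : ↥(Lam n m nseq)),
        M.mulVec v t = ∑ q ∈ Lam n m nseq,
          (if h : q ∈ Lam n m nseq then v ⟨q, h⟩ else 0) * x (t.1).1 ^ q.1 * y (t.1).2 ^ q.2 := by
      intro v t
      rw [← Finset.sum_attach (Lam n m nseq)
        (fun q => (if h : q ∈ Lam n m nseq then v ⟨q, h⟩ else 0) * x (t.1).1 ^ q.1 * y (t.1).2 ^ q.2)]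
      simp only [Matrix.mulVec, dotProduct, Finset.univ_eq_attach, hM, Matrix.of_apply]
      refine Finset.sum_congr rfl fun t' _ => ?_
      rw [dif_pos t'.2]
      ring
    have hker : ∀ v : ↥(Lam n m nseq) → ℝ, M.mulVec v = 0 → v = 0 := by
      intro v hv
      have hz : ∀ j ≤ m, ∀ i ≤ nseq j, ∑ l ∈ Finset.range (m + 1),
          ∑ k ∈ Finset.range (nseq l + 1),
            (fun q : ℕ × ℕ => if h : q ∈ Lam n m nseq then v ⟨q, h⟩ else 0) (k, l)
              * x i ^ k * y j ^ l = 0 := by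
        intro j hj i hi
        rw [← sum_Lam hle (fun q =>
          (if h : q ∈ Lam n m nseq then v ⟨q, h⟩ else 0) * x i ^ q.1 * y j ^ q.2)]
        have h1 := congrFun hv ⟨(i, j), hptΛ j hj i hi⟩
        rw [hsum_mv v ⟨(i, j), hptΛ j hj i hi⟩] at h1
        exact h1
      have hkey := key_aux x y m nseq (fun i i' h h' => hx i i' h (le_trans h' hn0))
        hy hmono (fun q : ℕ × ℕ => if h : q ∈ Lam n m nseq then v ⟨q, h⟩ else 0) hz
      funext t
      obtain ⟨h2, h3⟩ := (hmemΛ t.1).mp t.2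
      have h4 := hkey (t.1).2 h2 (t.1).1 h3
      simp only [Prod.mk.eta] at h4
      rw [dif_pos t.2] at h4
      simpa using h4
    have hinj : Function.Injective (M.mulVecLin) :=
      (injective_iff_map_eq_zero M.mulVecLin).mpr (fun v hv => hker v hv)
    have hsurj : Function.Surjective (M.mulVecLin) :=
      LinearMap.injective_iff_surjective.mp hinj
    intro f
    obtain ⟨v, hvf⟩ := hsurj (fun t : ↥(Lam n m nseq) => f (x (t.1).1, y (t.1).2))
    set c : ℕ × ℕ → ℝ := fun q => if h : q ∈ Lam n m nseq then v ⟨q, h⟩ else 0 with hc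
    have hc0 : ∀ q : ℕ × ℕ, ¬(q.2 ≤ m ∧ q.1 ≤ nseq q.2) → c q = 0 :=
      fun q hq => dif_neg (fun hmem => hq ((hmemΛ q).mp hmem))
    have hrep : ∀ p ∈ V, f p = ∑ q ∈ Lam n m nseq, c q * p.1 ^ q.1 * p.2 ^ q.2 := by
      intro p hp
      rw [hV] at hp
      obtain ⟨j, hj, i, hi, rfl⟩ := hp
      have h1 := congrFun hvf ⟨(i, j), hptΛ j hj i hi⟩
      have h2 : M.mulVec v ⟨(i, j), hptΛ j hj i hi⟩ = f (x i, y j) := h1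
      rw [hsum_mv v ⟨(i, j), hptΛ j hj i hi⟩] at h2
      exact h2.symm
    refine ⟨c, ⟨hc0, fun p hp => hrep p hp⟩, ?_⟩
    rintro c' ⟨hc'0, hc'rep⟩
    have hd : ∀ l ≤ m, ∀ k ≤ nseq l, (fun q : ℕ × ℕ => c' q - c q) (k, l) = 0 := by
      refine key_aux x y m nseq (fun i i' h h' => hx i i' h (le_trans h' hn0)) hy hmono
        (fun q : ℕ × ℕ => c' q - c q) ?_
      intro j hj i hi
      have hpV : (x i, y j) ∈ V := by rw [hV]; exact ⟨j, hj, i, hi, rfl⟩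
      have e1 := hc'rep _ hpV
      have e2 := hrep _ hpV
      have e3 : ∑ q ∈ Lam n m nseq, c' q * x i ^ q.1 * y j ^ q.2
          = ∑ q ∈ Lam n m nseq, c q * x i ^ q.1 * y j ^ q.2 := by
        rw [← e2]; exact e1.symm
      rw [← sum_Lam hle (fun q => (c' q - c q) * x i ^ q.1 * y j ^ q.2)]
      have : ∑ q ∈ Lam n m nseq, (c' q - c q) * x i ^ q.1 * y j ^ q.2
          = ∑ q ∈ Lam n m nseq, c' q * x i ^ q.1 * y j ^ q.2
            - ∑ q ∈ Lam n m nseq, c q * x i ^ q.1 * y j ^ q.2 := by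
        rw [← Finset.sum_sub_distrib]
        refine Finset.sum_congr rfl fun q _ => by ring
      rw [this, e3, sub_self]
    funext q
    by_cases hq : q ∈ Lam n m nseq
    · obtain ⟨h2, h3⟩ := (hmemΛ q).mp hq
      have := hd q.2 h2 q.1 h3
      simp only [Prod.mk.eta] at this
      linarith [this]
    · rw [hc'0 q (fun h => hq ((hmemΛ q).mpr h)), hc0 q (fun h => hq ((hmemΛ q).mpr h))]
end

section
/- Let V ⊆ ℝ^d be finite, W positive on V, and let {ℙ_k}_{k=0}^n be blocks of orthonormal polynomials with respect to ⟨f,g⟩ = Σ_{x∈V} f(x)g(x)W(x), satisfying the three-term relation x_i ℙ_k = A_{k,i} ℙ_{k+1} + B_{k,i} ℙ_k + A_{k-1,i}^T ℙ_{k-1} mod I(V). Then the Christoffel–Darboux formula holds: for each i and all x, y ∈ V with x_i ≠ y_i, Σ_{j=0}^k ℙ_j(x)^T ℙ_j(y) = [ℙ_{k+1}(x)^T A_{k,i}^T ℙ_k(y) − ℙ_k(x)^T A_{k,i} ℙ_{k+1}(y)] / (x_i − y_i). -/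
open MvPolynomial

private lemma cd_sum_swap_mul {α β : Type*} [Fintype β] (V : Finset α)
    (c : β → ℝ) (f : β → α → ℝ) (m : α → ℝ) :
    ∑ x ∈ V, (∑ u, c u * f u x) * m x = ∑ u, c u * ∑ x ∈ V, f u x * m x := by
  simp only [Finset.sum_mul, Finset.mul_sum, mul_assoc]
  exact Finset.sum_comm

/-- Christoffel–Darboux formula for discrete orthonormal polynomials on a
finite set `V ⊆ ℝ^d`:  if the blocks `ℙ_k = (P k s)_{s}` are orthonormal with
respect to `⟨f,g⟩ = Σ_{x∈V} f(x)g(x)W(x)` and satisfy the three-term relation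
`x_i ℙ_k = A_{k,i} ℙ_{k+1} + B_{k,i} ℙ_k + A_{k-1,i}ᵀ ℙ_{k-1}` as functions on
`V` (i.e. mod `I(V)`), then for all `x, y ∈ V` with `x_i ≠ y_i`,
`Σ_{j=0}^k ℙ_j(x)ᵀ ℙ_j(y)
  = [ℙ_{k+1}(x)ᵀ A_{k,i}ᵀ ℙ_k(y) − ℙ_k(x)ᵀ A_{k,i} ℙ_{k+1}(y)]/(x_i − y_i)`. -/
theorem stmt19 (d : ℕ) (V : Finset (Fin d → ℝ)) (W : (Fin d → ℝ) → ℝ)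
    (hW : ∀ x ∈ V, 0 < W x)
    (r : ℕ → ℕ) (P : (k : ℕ) → Fin (r k) → MvPolynomial (Fin d) ℝ)
    (hdeg : ∀ k s, (P k s).totalDegree ≤ k)
    (horth : ∀ (k k' : ℕ) (s : Fin (r k)) (t : Fin (r k')), (k, (s : ℕ)) ≠ (k', (t : ℕ)) →
      ∑ x ∈ V, eval x (P k s) * eval x (P k' t) * W x = 0)
    (hnorm : ∀ k s, ∑ x ∈ V, eval x (P k s) * eval x (P k s) * W x = 1)
    (A : (k : ℕ) → Fin d → Matrix (Fin (r k)) (Fin (r (k + 1))) ℝ)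
    (Bm : (k : ℕ) → Fin d → Matrix (Fin (r k)) (Fin (r k)) ℝ)
    (hrec0 : ∀ (i : Fin d) (s : Fin (r 0)), ∀ x ∈ V,
      eval x (X i * P 0 s) =
        (∑ t, A 0 i s t * eval x (P 1 t)) + ∑ t, Bm 0 i s t * eval x (P 0 t))
    (hrec : ∀ (k : ℕ) (i : Fin d) (s : Fin (r (k + 1))), ∀ x ∈ V,
      eval x (X i * P (k + 1) s) =
        (∑ t, A (k + 1) i s t * eval x (P (k + 2) t)) +
          (∑ t, Bm (k + 1) i s t * eval x (P (k + 1) t)) +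
            ∑ t, A k i t s * eval x (P k t)) :
    ∀ (k : ℕ) (i : Fin d), ∀ x ∈ V, ∀ y ∈ V, x i ≠ y i →
      ∑ j ∈ Finset.range (k + 1), ∑ s, eval x (P j s) * eval y (P j s) =
        ((∑ s, ∑ t, eval x (P (k + 1) t) * A k i s t * eval y (P k s)) -
          ∑ s, ∑ t, eval x (P k s) * A k i s t * eval y (P (k + 1) t)) /
            (x i - y i) := by
  classical
  -- inner products of blocks
  have hinner : ∀ (k k' : ℕ) (s : Fin (r k)) (t : Fin (r k')),
      ∑ z ∈ V, eval z (P k s) * (eval z (P k' t) * W z) =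
        if h : k = k' ∧ (s : ℕ) = (t : ℕ) then 1 else 0 := by
    intro k k' s t
    by_cases h : k = k' ∧ (s : ℕ) = (t : ℕ)
    · obtain ⟨h1, h2⟩ := h
      subst h1
      have : s = t := Fin.ext h2
      subst this
      rw [dif_pos (⟨rfl, rfl⟩ : k = k ∧ (s : ℕ) = (s : ℕ))]
      simpa [mul_assoc] using hnorm k s
    · rw [dif_neg h]
      have hne : ((k : ℕ), (s : ℕ)) ≠ (k', (t : ℕ)) := by
        intro hc
        apply h
        refine ⟨?_, ?_⟩
        · exact congrArg Prod.fst hc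
        · exact congrArg Prod.snd hc
      simpa [mul_assoc] using horth k k' s t hne
  -- symmetry of Bm
  have hBsym : ∀ (k : ℕ) (i : Fin d) (s t : Fin (r k)), Bm k i s t = Bm k i t s := by
    have key : ∀ (k : ℕ) (i : Fin d) (s t : Fin (r k)),
        ∑ z ∈ V, (z i * eval z (P k s)) * (eval z (P k t) * W z) = Bm k i s t := by
      intro k i s t
      match k with
      | 0 =>
        have h1 : ∑ z ∈ V, (z i * eval z (P 0 s)) * (eval z (P 0 t) * W z)
            = ∑ z ∈ V, ((∑ u, A 0 i s u * eval z (P 1 u)) +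
                ∑ u, Bm 0 i s u * eval z (P 0 u)) * (eval z (P 0 t) * W z) := by
          refine Finset.sum_congr rfl fun z hz => ?_
          have h := hrec0 i s z hz
          simp only [map_mul, eval_X] at h
          rw [h]
        rw [h1]
        simp only [add_mul, Finset.sum_add_distrib]
        rw [cd_sum_swap_mul, cd_sum_swap_mul]
        have e1 : ∀ u : Fin (r 1),
            ∑ z ∈ V, eval z (P 1 u) * (eval z (P 0 t) * W z) = 0 := by
          intro u
          rw [hinner 1 0 u t]
          simp
        have e2 : ∀ u : Fin (r 0),
            (∑ z ∈ V, eval z (P 0 u) * (eval z (P 0 t) * W z)) =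
              if (u : ℕ) = (t : ℕ) then 1 else 0 := by
          intro u
          rw [hinner 0 0 u t]
          by_cases h : (u : ℕ) = (t : ℕ) <;> simp [h]
        simp only [e1, e2, mul_zero, Finset.sum_const_zero, zero_add, mul_ite, mul_one,
          mul_zero]
        simp only [Fin.val_inj]
        simp [Finset.sum_ite_eq' Finset.univ t (fun u => Bm 0 i s u)]
      | (m + 1) =>
        have h1 : ∑ z ∈ V, (z i * eval z (P (m+1) s)) * (eval z (P (m+1) t) * W z)
            = ∑ z ∈ V, ((∑ u, A (m+1) i s u * eval z (P (m+2) u)) +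
                (∑ u, Bm (m+1) i s u * eval z (P (m+1) u)) +
                ∑ u, A m i u s * eval z (P m u)) * (eval z (P (m+1) t) * W z) := by
          refine Finset.sum_congr rfl fun z hz => ?_
          have h := hrec m i s z hz
          simp only [map_mul, eval_X] at h
          rw [h]
        rw [h1]
        simp only [add_mul, Finset.sum_add_distrib]
        rw [cd_sum_swap_mul, cd_sum_swap_mul, cd_sum_swap_mul]
        have e1 : ∀ u : Fin (r (m+2)),
            ∑ z ∈ V, eval z (P (m+2) u) * (eval z (P (m+1) t) * W z) = 0 := by
          intro u
          rw [hinner (m+2) (m+1) u t]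
          simp
        have e3 : ∀ u : Fin (r m),
            ∑ z ∈ V, eval z (P m u) * (eval z (P (m+1) t) * W z) = 0 := by
          intro u
          rw [hinner m (m+1) u t]
          simp
        have e2 : ∀ u : Fin (r (m+1)),
            (∑ z ∈ V, eval z (P (m+1) u) * (eval z (P (m+1) t) * W z)) =
              if (u : ℕ) = (t : ℕ) then 1 else 0 := by
          intro u
          rw [hinner (m+1) (m+1) u t]
          by_cases h : (u : ℕ) = (t : ℕ) <;> simp [h]
        simp only [e1, e2, e3, mul_zero, Finset.sum_const_zero, zero_add, add_zero,
          mul_ite, mul_one]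
        simp only [Fin.val_inj]
        simp [Finset.sum_ite_eq' Finset.univ t (fun u => Bm (m+1) i s u)]
    intro k i s t
    rw [← key k i s t, ← key k i t s]
    exact Finset.sum_congr rfl fun z _ => by ring
  intro k i x hx y hy hxy
  -- the multiplied-out Christoffel–Darboux identity, by induction
  have base : (x i - y i) * (∑ s, eval x (P 0 s) * eval y (P 0 s)) =
      (∑ s, ∑ t, eval x (P (0 + 1) t) * A 0 i s t * eval y (P 0 s)) -
        ∑ s, ∑ t, eval x (P 0 s) * A 0 i s t * eval y (P (0 + 1) t) := by
    have ex : x i * (∑ s, eval x (P 0 s) * eval y (P 0 s)) =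
        (∑ s, ∑ t, A 0 i s t * eval x (P 1 t) * eval y (P 0 s)) +
          ∑ s, ∑ t, Bm 0 i s t * eval x (P 0 t) * eval y (P 0 s) := by
      rw [Finset.mul_sum, ← Finset.sum_add_distrib]
      refine Finset.sum_congr rfl fun s _ => ?_
      have h := hrec0 i s x hx
      simp only [map_mul, eval_X] at h
      calc x i * (eval x (P 0 s) * eval y (P 0 s))
          = (x i * eval x (P 0 s)) * eval y (P 0 s) := by ring
        _ = _ := by rw [h, add_mul, Finset.sum_mul, Finset.sum_mul]
    have ey : y i * (∑ s, eval x (P 0 s) * eval y (P 0 s)) =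
        (∑ s, ∑ t, A 0 i s t * eval y (P 1 t) * eval x (P 0 s)) +
          ∑ s, ∑ t, Bm 0 i s t * eval y (P 0 t) * eval x (P 0 s) := by
      rw [Finset.mul_sum, ← Finset.sum_add_distrib]
      refine Finset.sum_congr rfl fun s _ => ?_
      have h := hrec0 i s y hy
      simp only [map_mul, eval_X] at h
      calc y i * (eval x (P 0 s) * eval y (P 0 s))
          = (y i * eval y (P 0 s)) * eval x (P 0 s) := by ring
        _ = _ := by rw [h, add_mul, Finset.sum_mul, Finset.sum_mul]
    have hB : (∑ s, ∑ t, Bm 0 i s t * eval x (P 0 t) * eval y (P 0 s)) =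
        ∑ s, ∑ t, Bm 0 i s t * eval y (P 0 t) * eval x (P 0 s) := by
      rw [Finset.sum_comm]
      exact Finset.sum_congr rfl fun a _ => Finset.sum_congr rfl fun b _ => by
        rw [hBsym 0 i b a]; ring
    have e1 : (∑ s, ∑ t, A 0 i s t * eval x (P 1 t) * eval y (P 0 s)) =
        ∑ s, ∑ t, eval x (P (0+1) t) * A 0 i s t * eval y (P 0 s) :=
      Finset.sum_congr rfl fun _ _ => Finset.sum_congr rfl fun _ _ => by ring
    have e2 : (∑ s, ∑ t, A 0 i s t * eval y (P 1 t) * eval x (P 0 s)) =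
        ∑ s, ∑ t, eval x (P 0 s) * A 0 i s t * eval y (P (0+1) t) :=
      Finset.sum_congr rfl fun _ _ => Finset.sum_congr rfl fun _ _ => by ring
    rw [sub_mul, ex, ey, hB, e1, e2]
    ring
  have step : ∀ m : ℕ, (x i - y i) * (∑ s, eval x (P (m+1) s) * eval y (P (m+1) s)) =
      ((∑ s, ∑ t, eval x (P (m+2) t) * A (m+1) i s t * eval y (P (m+1) s)) -
        ∑ s, ∑ t, eval x (P (m+1) s) * A (m+1) i s t * eval y (P (m+2) t)) -
      ((∑ s, ∑ t, eval x (P (m+1) t) * A m i s t * eval y (P m s)) -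
        ∑ s, ∑ t, eval x (P m s) * A m i s t * eval y (P (m+1) t)) := by
    intro m
    have ex : x i * (∑ s, eval x (P (m+1) s) * eval y (P (m+1) s)) =
        ((∑ s, ∑ t, A (m+1) i s t * eval x (P (m+2) t) * eval y (P (m+1) s)) +
          ∑ s, ∑ t, Bm (m+1) i s t * eval x (P (m+1) t) * eval y (P (m+1) s)) +
          ∑ s, ∑ t, A m i t s * eval x (P m t) * eval y (P (m+1) s) := by
      rw [Finset.mul_sum, ← Finset.sum_add_distrib, ← Finset.sum_add_distrib]
      refine Finset.sum_congr rfl fun s _ => ?_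
      have h := hrec m i s x hx
      simp only [map_mul, eval_X] at h
      calc x i * (eval x (P (m+1) s) * eval y (P (m+1) s))
          = (x i * eval x (P (m+1) s)) * eval y (P (m+1) s) := by ring
        _ = _ := by
          rw [h, add_mul, add_mul, Finset.sum_mul, Finset.sum_mul, Finset.sum_mul]
    have ey : y i * (∑ s, eval x (P (m+1) s) * eval y (P (m+1) s)) =
        ((∑ s, ∑ t, A (m+1) i s t * eval y (P (m+2) t) * eval x (P (m+1) s)) +
          ∑ s, ∑ t, Bm (m+1) i s t * eval y (P (m+1) t) * eval x (P (m+1) s)) +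
          ∑ s, ∑ t, A m i t s * eval y (P m t) * eval x (P (m+1) s) := by
      rw [Finset.mul_sum, ← Finset.sum_add_distrib, ← Finset.sum_add_distrib]
      refine Finset.sum_congr rfl fun s _ => ?_
      have h := hrec m i s y hy
      simp only [map_mul, eval_X] at h
      calc y i * (eval x (P (m+1) s) * eval y (P (m+1) s))
          = (y i * eval y (P (m+1) s)) * eval x (P (m+1) s) := by ring
        _ = _ := by
          rw [h, add_mul, add_mul, Finset.sum_mul, Finset.sum_mul, Finset.sum_mul]
    have hB : (∑ s, ∑ t, Bm (m+1) i s t * eval x (P (m+1) t) * eval y (P (m+1) s)) =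
        ∑ s, ∑ t, Bm (m+1) i s t * eval y (P (m+1) t) * eval x (P (m+1) s) := by
      rw [Finset.sum_comm]
      exact Finset.sum_congr rfl fun a _ => Finset.sum_congr rfl fun b _ => by
        rw [hBsym (m+1) i b a]; ring
    have e1 : (∑ s, ∑ t, A (m+1) i s t * eval x (P (m+2) t) * eval y (P (m+1) s)) =
        ∑ s, ∑ t, eval x (P (m+2) t) * A (m+1) i s t * eval y (P (m+1) s) :=
      Finset.sum_congr rfl fun _ _ => Finset.sum_congr rfl fun _ _ => by ring
    have e2 : (∑ s, ∑ t, A (m+1) i s t * eval y (P (m+2) t) * eval x (P (m+1) s)) =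
        ∑ s, ∑ t, eval x (P (m+1) s) * A (m+1) i s t * eval y (P (m+2) t) :=
      Finset.sum_congr rfl fun _ _ => Finset.sum_congr rfl fun _ _ => by ring
    have e3 : (∑ s, ∑ t, A m i t s * eval x (P m t) * eval y (P (m+1) s)) =
        ∑ s, ∑ t, eval x (P m s) * A m i s t * eval y (P (m+1) t) := by
      rw [Finset.sum_comm]
      exact Finset.sum_congr rfl fun a _ => Finset.sum_congr rfl fun b _ => by ring
    have e4 : (∑ s, ∑ t, A m i t s * eval y (P m t) * eval x (P (m+1) s)) =
        ∑ s, ∑ t, eval x (P (m+1) t) * A m i s t * eval y (P m s) := by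
      rw [Finset.sum_comm]
      exact Finset.sum_congr rfl fun a _ => Finset.sum_congr rfl fun b _ => by ring
    rw [sub_mul, ex, ey, hB, e1, e2, e3, e4]
    ring
  have main : ∀ m : ℕ,
      (x i - y i) * ∑ j ∈ Finset.range (m + 1), ∑ s, eval x (P j s) * eval y (P j s) =
        (∑ s, ∑ t, eval x (P (m + 1) t) * A m i s t * eval y (P m s)) -
          ∑ s, ∑ t, eval x (P m s) * A m i s t * eval y (P (m + 1) t) := by
    intro m
    induction m with
    | zero => simpa using base
    | succ m ih =>
      rw [Finset.sum_range_succ, mul_add, ih, step m]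
      ring
  rw [eq_div_iff (sub_ne_zero.mpr hxy), mul_comm]
  exact main k
end
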